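/- Let d = 5, k = 2, and K₀ ⊆ ℝ⁵ be the union over all pairs 1 ≤ i < j ≤ 5 of the squares {a e_i + b e_j : −1/2 ≤ a, b ≤ 1/2}. Define Ψ : (ℝ⁵)⁵ → (ℝ⁵)² by Ψ(x₁,...,x₅) = (x₅ + x₂ − x₁, x₅ + x₄ − x₃). Then there exist probability measures λ₁,...,λ₅ supported on K₀ such that for every nonnegative Borel function f on (ℝ⁵)², ∫ f(Ψ(x₁,...,x₅)) dλ₁(x₁)⋯dλ₅(x₅) ≤ ∫_{(ℝ⁵)²} f dm₁₀. In particular Ψ((K₀)⁵) has positive 10-dimensional Lebesgue measure. -/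

import Mathlib

open MeasureTheory Metric Set
open scoped Pointwise ENNReal

/-- The union of the coordinate squares `{a e_i + b e_j : |a|,|b| ≤ 1/2}`, `1 ≤ i < j ≤ 5`,
in `ℝ⁵`. -/
def squaresUnion : Set (EuclideanSpace ℝ (Fin 5)) :=
  ⋃ (i : Fin 5) (j : Fin 5) (_ : i < j),
    {x | (∀ l : Fin 5, l ≠ i → l ≠ j → x l = 0) ∧ |x i| ≤ 1 / 2 ∧ |x j| ≤ 1 / 2}

/-- The inflation map `Ψ(x₁,…,x₅) = (x₅ + x₂ − x₁, x₅ + x₄ − x₃)`. -/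
noncomputable def inflationMap (x₁ x₂ x₃ x₄ x₅ : EuclideanSpace ℝ (Fin 5)) :
    EuclideanSpace ℝ (Fin 5) × EuclideanSpace ℝ (Fin 5) :=
  (x₅ + x₂ - x₁, x₅ + x₄ - x₃)

/-!
Each `λₖ` is the image of the uniform measure on `[-1/2, 1/2]²` under a linear embedding onto a
coordinate square: `x₁` and `x₃` (with a sign) onto the `(e₄, e₅)`-square, `x₂` onto `(e₂, e₃)`,
`x₄` onto `(e₁, e₃)` and `x₅` onto `(e₁, e₂)`. Composed with these embeddings, `Ψ` becomes a
permutation of the ten real parameters followed by the shear `(u, v) ↦ (u + v₂ e₂, v + u₁ e₁)`,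
so it preserves Lebesgue measure. Hence `Ψ(x₁, …, x₅)` is distributed as Lebesgue measure
restricted to the image of a unit cube, which lies in `Ψ(K₀⁵)` and has volume `1`.
-/

noncomputable section

theorem lintegral_prod_five {α₁ α₂ α₃ α₄ α₅ : Type*} [MeasurableSpace α₁] [MeasurableSpace α₂]
    [MeasurableSpace α₃] [MeasurableSpace α₄] [MeasurableSpace α₅] (μ₁ : Measure α₁)
    (μ₂ : Measure α₂) (μ₃ : Measure α₃) (μ₄ : Measure α₄) (μ₅ : Measure α₅) [SFinite μ₂]
    [SFinite μ₃] [SFinite μ₄] [SFinite μ₅] {f : α₁ × α₂ × α₃ × α₄ × α₅ → ℝ≥0∞}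
    (hf : Measurable f) :
    ∫⁻ x₁, ∫⁻ x₂, ∫⁻ x₃, ∫⁻ x₄, ∫⁻ x₅, f (x₁, x₂, x₃, x₄, x₅) ∂μ₅ ∂μ₄ ∂μ₃ ∂μ₂ ∂μ₁ =
      ∫⁻ x, f x ∂(μ₁.prod (μ₂.prod (μ₃.prod (μ₄.prod μ₅)))) := by
  rw [lintegral_prod _ hf.aemeasurable]
  refine lintegral_congr fun x₁ => ?_
  have hf₁ : Measurable fun y => f (x₁, y) := hf.comp measurable_prodMk_left
  rw [lintegral_prod _ hf₁.aemeasurable]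
  refine lintegral_congr fun x₂ => ?_
  have hf₂ : Measurable fun y => f (x₁, x₂, y) := hf₁.comp measurable_prodMk_left
  rw [lintegral_prod _ hf₂.aemeasurable]
  refine lintegral_congr fun x₃ => ?_
  have hf₃ : Measurable fun y => f (x₁, x₂, x₃, y) := hf₂.comp measurable_prodMk_left
  rw [lintegral_prod _ hf₃.aemeasurable]

section Shear

variable {α G : Type*} [MeasurableSpace α] [MeasurableSpace G] [AddGroup G] [MeasurableAdd₂ G]
  (μ : Measure α) (ν : Measure G) [SFinite μ] [SFinite ν] [ν.IsAddRightInvariant]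
  {φ : α → G}

theorem measurePreserving_snd_add_comp_fst (hφ : Measurable φ) :
    MeasurePreserving (fun p : α × G => (p.1, p.2 + φ p.1)) (μ.prod ν) (μ.prod ν) :=
  (MeasurePreserving.id μ).skew_product (measurable_snd.add (hφ.comp measurable_fst))
    (.of_forall fun a => map_add_right_eq_self ν (φ a))

theorem measurePreserving_fst_add_comp_snd (hφ : Measurable φ) :
    MeasurePreserving (fun p : G × α => (p.1 + φ p.2, p.2)) (ν.prod μ) (ν.prod μ) :=
  Measure.measurePreserving_swap.comp
    ((measurePreserving_snd_add_comp_fst μ ν hφ).comp Measure.measurePreserving_swap)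

end Shear

def MeasurableEquiv.consPair {α : Type*} [MeasurableSpace α] {n : ℕ} (e : α ≃ᵐ (Fin n → ℝ)) :
    (ℝ × ℝ) × α ≃ᵐ (Fin (2 + n) → ℝ) :=
  (MeasurableEquiv.finTwoArrow.symm.prodCongr e).trans
    ((MeasurableEquiv.sumPiEquivProdPi fun _ => ℝ).symm.trans
      (MeasurableEquiv.piCongrLeft (fun _ => ℝ) finSumFinEquiv))

theorem measurePreserving_consPair {α : Type*} [MeasureSpace α] [SFinite (volume : Measure α)]
    {n : ℕ} {e : α ≃ᵐ (Fin n → ℝ)} (he : MeasurePreserving e volume volume) :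
    MeasurePreserving (MeasurableEquiv.consPair e) volume volume :=
  (((volume_preserving_finTwoArrow ℝ).symm _).prod he).trans
    ((volume_measurePreserving_sumPiEquivProdPi_symm _).trans
      (volume_measurePreserving_piCongrLeft _ _))

namespace Inflation

local notation "ℝ⁵" => EuclideanSpace ℝ (Fin 5)

theorem measurableSet_squaresUnion : MeasurableSet squaresUnion := by
  unfold squaresUnion
  measurability

def centeredSquare : Set (ℝ × ℝ) := Icc (-(1 / 2)) (1 / 2) ×ˢ Icc (-(1 / 2)) (1 / 2)

theorem measurableSet_centeredSquare : MeasurableSet centeredSquare :=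
  measurableSet_Icc.prod measurableSet_Icc

theorem volume_centeredSquare : volume centeredSquare = 1 := by
  rw [centeredSquare, Measure.volume_eq_prod, Measure.prod_prod, Real.volume_Icc]
  norm_num

def uniformSquare : Measure (ℝ × ℝ) := volume.restrict centeredSquare

instance : IsProbabilityMeasure uniformSquare :=
  ⟨by rw [uniformSquare, Measure.restrict_apply_univ, volume_centeredSquare]⟩

def squareEmbedding (i j : Fin 5) (s : ℝ) (w : ℝ × ℝ) : ℝ⁵ :=
  s • (w.1 • EuclideanSpace.single i 1 + w.2 • EuclideanSpace.single j 1)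

theorem measurable_squareEmbedding (i j : Fin 5) (s : ℝ) :
    Measurable (squareEmbedding i j s) := by
  unfold squareEmbedding
  fun_prop

theorem squareEmbedding_mem_squaresUnion {i j : Fin 5} (hij : i < j) {s : ℝ} (hs : |s| ≤ 1)
    {w : ℝ × ℝ} (hw : w ∈ centeredSquare) : squareEmbedding i j s w ∈ squaresUnion := by
  have shrink (a : ℝ) (ha : a ∈ Icc (-(1 / 2)) (1 / 2)) : |s * a| ≤ 1 / 2 := by
    rw [abs_mul]
    exact (mul_le_of_le_one_left (abs_nonneg a) hs).trans (abs_le.2 ha)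
  refine mem_iUnion₂.2 ⟨i, j, mem_iUnion.2 ⟨hij, fun l hli hlj => ?_, ?_, ?_⟩⟩
  · simp [squareEmbedding, hli, hlj]
  · simpa [squareEmbedding, hij.ne] using shrink _ hw.1
  · simpa [squareEmbedding, hij.ne'] using shrink _ hw.2

/-- Coordinates are numbered from `0`. The signs of `x₁` and `x₃` keep `x₂ - x₁` and `x₄ - x₃`
free of reflections. -/
def squareEmbeddings : Fin 5 → ℝ × ℝ → ℝ⁵ :=
  ![squareEmbedding 3 4 (-1), squareEmbedding 1 2 1, squareEmbedding 3 4 (-1),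
    squareEmbedding 0 2 1, squareEmbedding 0 1 1]

theorem measurable_squareEmbeddings (k : Fin 5) : Measurable (squareEmbeddings k) := by
  fin_cases k <;> exact measurable_squareEmbedding _ _ _

theorem squareEmbeddings_mem_squaresUnion (k : Fin 5) {w : ℝ × ℝ} (hw : w ∈ centeredSquare) :
    squareEmbeddings k w ∈ squaresUnion := by
  fin_cases k <;> exact squareEmbedding_mem_squaresUnion (by decide) (by norm_num) hw

def inflationMeasure (k : Fin 5) : Measure ℝ⁵ := uniformSquare.map (squareEmbeddings k)

instance (k : Fin 5) : IsProbabilityMeasure (inflationMeasure k) :=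
  Measure.isProbabilityMeasure_map (measurable_squareEmbeddings k).aemeasurable

theorem inflationMeasure_compl_squaresUnion (k : Fin 5) :
    inflationMeasure k squaresUnionᶜ = 0 := by
  rw [inflationMeasure, Measure.map_apply (measurable_squareEmbeddings k)
    measurableSet_squaresUnion.compl]
  exact ae_restrict_of_forall_mem measurableSet_centeredSquare fun w hw =>
    squareEmbeddings_mem_squaresUnion k hw

abbrev ParamSpace : Type := (ℝ × ℝ) × (ℝ × ℝ) × (ℝ × ℝ) × (ℝ × ℝ) × (ℝ × ℝ)

def paramBox : Set ParamSpace :=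
  centeredSquare ×ˢ centeredSquare ×ˢ centeredSquare ×ˢ centeredSquare ×ˢ centeredSquare

theorem prod_uniformSquare :
    uniformSquare.prod (uniformSquare.prod (uniformSquare.prod
      (uniformSquare.prod uniformSquare))) = volume.restrict paramBox := by
  simp only [uniformSquare, paramBox, Measure.prod_restrict]
  rfl

theorem volume_paramBox : volume paramBox = 1 := by
  rw [← Measure.restrict_apply_univ, ← prod_uniformSquare, measure_univ]

def inflationOnParams (w : ParamSpace) : ℝ⁵ × ℝ⁵ :=
  inflationMap (squareEmbeddings 0 w.1) (squareEmbeddings 1 w.2.1) (squareEmbeddings 2 w.2.2.1)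
    (squareEmbeddings 3 w.2.2.2.1) (squareEmbeddings 4 w.2.2.2.2)

theorem lintegral_inflationMeasure {f : ℝ⁵ × ℝ⁵ → ℝ≥0∞} (hf : Measurable f) :
    ∫⁻ x₁, ∫⁻ x₂, ∫⁻ x₃, ∫⁻ x₄, ∫⁻ x₅, f (inflationMap x₁ x₂ x₃ x₄ x₅)
      ∂(inflationMeasure 4) ∂(inflationMeasure 3) ∂(inflationMeasure 2) ∂(inflationMeasure 1)
      ∂(inflationMeasure 0) = ∫⁻ w in paramBox, f (inflationOnParams w) := by
  have hF : Measurable fun x : ℝ⁵ × ℝ⁵ × ℝ⁵ × ℝ⁵ × ℝ⁵ =>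
      f (inflationMap x.1 x.2.1 x.2.2.1 x.2.2.2.1 x.2.2.2.2) :=
    hf.comp (by unfold inflationMap; fun_prop)
  have he := measurable_squareEmbeddings
  refine (lintegral_prod_five _ _ _ _ _ hF).trans ?_
  simp only [inflationMeasure]
  rw [Measure.map_prod_map _ _ (he 3) (he 4),
    Measure.map_prod_map _ _ (he 2) ((he 3).prodMap (he 4)),
    Measure.map_prod_map _ _ (he 1) ((he 2).prodMap ((he 3).prodMap (he 4))),
    Measure.map_prod_map _ _ (he 0) ((he 1).prodMap ((he 2).prodMap ((he 3).prodMap (he 4)))),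
    lintegral_map hF ((he 0).prodMap ((he 1).prodMap ((he 2).prodMap ((he 3).prodMap (he 4))))),
    prod_uniformSquare]
  rfl

def flatten : ParamSpace ≃ᵐ (Fin 10 → ℝ) :=
  .consPair (.consPair (.consPair (.consPair MeasurableEquiv.finTwoArrow.symm)))

theorem measurePreserving_flatten : MeasurePreserving flatten volume volume :=
  measurePreserving_consPair <| measurePreserving_consPair <| measurePreserving_consPair <|
    measurePreserving_consPair <| (volume_preserving_finTwoArrow ℝ).symm _

-- `flatten` lists `w₁.1, w₁.2, …, w₅.1, w₅.2`; see `rearrange_apply`.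
def rearrangeIndex : Fin 5 ⊕ Fin 5 ≃ Fin 10 :=
  Equiv.ofBijective (Sum.elim ![8, 2, 3, 0, 1] ![6, 9, 7, 4, 5]) (by decide)

def rearrange : ParamSpace ≃ᵐ ℝ⁵ × ℝ⁵ :=
  flatten.trans ((MeasurableEquiv.piCongrLeft (fun _ => ℝ) rearrangeIndex).symm.trans
    ((MeasurableEquiv.sumPiEquivProdPi fun _ => ℝ).trans
      ((MeasurableEquiv.toLp 2 _).prodCongr (MeasurableEquiv.toLp 2 _))))

theorem measurePreserving_rearrange : MeasurePreserving rearrange volume volume :=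
  measurePreserving_flatten.trans (((volume_measurePreserving_piCongrLeft _ _).symm _).trans
    ((volume_measurePreserving_sumPiEquivProdPi _).trans
      ((PiLp.volume_preserving_toLp _).prod (PiLp.volume_preserving_toLp _))))

theorem rearrange_apply (w₁ w₂ w₃ w₄ w₅ : ℝ × ℝ) :
    rearrange (w₁, w₂, w₃, w₄, w₅) =
      (!₂[w₅.1, w₂.1, w₂.2, w₁.1, w₁.2], !₂[w₄.1, w₅.2, w₄.2, w₃.1, w₃.2]) := by
  ext l <;> fin_cases l <;> rfl

def shear (p : ℝ⁵ × ℝ⁵) : ℝ⁵ × ℝ⁵ :=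
  (p.1 + p.2 1 • EuclideanSpace.single 1 1, p.2 + p.1 0 • EuclideanSpace.single 0 1)

theorem measurePreserving_shear : MeasurePreserving shear volume volume := by
  have h : shear = (fun p : ℝ⁵ × ℝ⁵ => (p.1 + p.2 1 • EuclideanSpace.single 1 1, p.2)) ∘
      (fun p => (p.1, p.2 + p.1 0 • EuclideanSpace.single 0 1)) := by
    funext p
    ext l <;> fin_cases l <;> simp [shear]
  rw [h]
  exact (measurePreserving_fst_add_comp_snd volume volume
    (φ := fun v : ℝ⁵ => v 1 • EuclideanSpace.single 1 1) (by fun_prop)).comp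
    (measurePreserving_snd_add_comp_fst volume volume
      (φ := fun u : ℝ⁵ => u 0 • EuclideanSpace.single 0 1) (by fun_prop))

theorem inflationOnParams_eq_shear_rearrange (w : ParamSpace) :
    inflationOnParams w = shear (rearrange w) := by
  obtain ⟨w₁, w₂, w₃, w₄, w₅⟩ := w
  rw [rearrange_apply]
  ext l <;> fin_cases l <;>
    simp [inflationOnParams, inflationMap, squareEmbeddings, squareEmbedding, shear] <;> ring

theorem measurePreserving_inflationOnParams :
    MeasurePreserving inflationOnParams volume volume := by
  rw [show inflationOnParams = shear ∘ rearrange from funext inflationOnParams_eq_shear_rearrange]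
  exact measurePreserving_shear.comp measurePreserving_rearrange

end Inflation

end

open Inflation

theorem inflation_measures_exist :
    ∃ lam : Fin 5 → Measure (EuclideanSpace ℝ (Fin 5)),
      (∀ i, IsProbabilityMeasure (lam i)) ∧
      (∀ i, lam i squaresUnionᶜ = 0) ∧
      (∀ f : EuclideanSpace ℝ (Fin 5) × EuclideanSpace ℝ (Fin 5) → ℝ≥0∞, Measurable f →
        (∫⁻ x₁, ∫⁻ x₂, ∫⁻ x₃, ∫⁻ x₄, ∫⁻ x₅, f (inflationMap x₁ x₂ x₃ x₄ x₅)
          ∂(lam 4) ∂(lam 3) ∂(lam 2) ∂(lam 1) ∂(lam 0)) ≤ ∫⁻ z, f z ∂volume) ∧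
      0 < volume {z : EuclideanSpace ℝ (Fin 5) × EuclideanSpace ℝ (Fin 5) |
        ∃ x₁ ∈ squaresUnion, ∃ x₂ ∈ squaresUnion, ∃ x₃ ∈ squaresUnion,
        ∃ x₄ ∈ squaresUnion, ∃ x₅ ∈ squaresUnion, z = inflationMap x₁ x₂ x₃ x₄ x₅} := by
  refine ⟨inflationMeasure, fun k => inferInstance, inflationMeasure_compl_squaresUnion,
    fun f hf => ?_, ?_⟩
  · calc _ = ∫⁻ w in paramBox, f (inflationOnParams w) := lintegral_inflationMeasure hf
      _ ≤ ∫⁻ w, f (inflationOnParams w) := setLIntegral_le_lintegral _ _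
      _ = ∫⁻ z, f z := measurePreserving_inflationOnParams.lintegral_comp hf
  · refine (volume_paramBox ▸ one_pos : 0 < volume paramBox).trans_le
      ((measure_mono fun w hw => ?_).trans
        (measurePreserving_inflationOnParams.measure_preimage_le _))
    exact ⟨_, squareEmbeddings_mem_squaresUnion 0 hw.1,
      _, squareEmbeddings_mem_squaresUnion 1 hw.2.1,
      _, squareEmbeddings_mem_squaresUnion 2 hw.2.2.1,
      _, squareEmbeddings_mem_squaresUnion 3 hw.2.2.2.1,
      _, squareEmbeddings_mem_squaresUnion 4 hw.2.2.2.2, rfl⟩
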